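/- Constructor lemma: if ⊢ Σ sig and ⊢ Σ₊ sig where Σ₊ extends Σ (Σ₊ ≽ Σ), and some block of Σ₊ contains the declaration c : A_c⁺ → s_c⁺ with Σ₊ ⊢ s_c⁺ ⊑ s and s ∈ dom(Σ), then there exist A_c and s_c such that some block of Σ contains c : A_c → s_c, Σ₊ ⊢ s_c⁺ ⊑ s_c, and Σ₊ ⊢ A_c⁺ ≤ A_c. -/
import Mathlib


set_option maxHeartbeats 1000000

/-! ## Names -/

abbrev SortName := String
abbrev ConName := String
abbrev DataName := String
abbrev Var := String

/-! ## Types -/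

inductive Ty : Type
  | unit : Ty
  | arr : Ty → Ty → Ty
  | prod : Ty → Ty → Ty
  | sort : SortName → Ty
  | inter : Ty → Ty → Ty
  deriving DecidableEq

inductive UTy : Type
  | unit : UTy
  | arr : UTy → UTy → UTy
  | prod : UTy → UTy → UTy
  | data : DataName → UTy
  deriving DecidableEq

/-! ## Signatures -/

inductive Decl : Type
  | subsort : SortName → SortName → Decl
  | con : ConName → Ty → SortName → Decl
  deriving DecidableEq

structure Block : Type where
  sorts : List (SortName × DataName)
  decls : List Decl
  deriving DecidableEq

/-- A signature is a finite sequence of blocks (later blocks to the right). -/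
abbrev Sig := List Block

def Block.domS (b : Block) : List SortName := b.sorts.map Prod.fst

def sigDom (Sgn : Sig) : List SortName := Sgn.foldr (fun b acc => b.domS ++ acc) []

def declaresSub (Sgn : Sig) (s1 s2 : SortName) : Prop :=
  ∃ b ∈ Sgn, Decl.subsort s1 s2 ∈ b.decls

def declaresCon (Sgn : Sig) (c : ConName) (A : Ty) (s : SortName) : Prop :=
  ∃ b ∈ Sgn, Decl.con c A s ∈ b.decls

def declaresSort (Sgn : Sig) (s : SortName) (d : DataName) : Prop :=
  ∃ b ∈ Sgn, (s, d) ∈ b.sorts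

/-! ## Subsorting and subtyping -/

inductive Subsort (Sgn : Sig) : SortName → SortName → Prop
  | assum {s1 s2} : declaresSub Sgn s1 s2 → Subsort Sgn s1 s2
  | refl {s} : s ∈ sigDom Sgn → Subsort Sgn s s
  | trans {s1 s2 s3} : Subsort Sgn s1 s2 → Subsort Sgn s2 s3 → Subsort Sgn s1 s3

inductive Subty (Sgn : Sig) : Ty → Ty → Prop
  | unit : Subty Sgn .unit .unit
  | prod {A1 A2 B1 B2} : Subty Sgn A1 B1 → Subty Sgn A2 B2 →
      Subty Sgn (.prod A1 A2) (.prod B1 B2)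
  | sort {s t} : Subsort Sgn s t → Subty Sgn (.sort s) (.sort t)
  | arr {A1 A2 B1 B2} : Subty Sgn B1 A1 → Subty Sgn A2 B2 →
      Subty Sgn (.arr A1 A2) (.arr B1 B2)
  | interL1 {A1 A2 B} : Subty Sgn A1 B → Subty Sgn (.inter A1 A2) B
  | interL2 {A1 A2 B} : Subty Sgn A2 B → Subty Sgn (.inter A1 A2) B
  | interR {A B1 B2} : Subty Sgn A B1 → Subty Sgn A B2 → Subty Sgn A (.inter B1 B2)

/-! ## Unrefined signature, refinement, well-formedness -/

/-- The unrefined signature Ψ: each constructor has a unique typing c : τ → d. -/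
structure UrSig : Type where
  cons : List (ConName × UTy × DataName)
  unique : ∀ c t1 d1 t2 d2, (c, t1, d1) ∈ cons → (c, t2, d2) ∈ cons → t1 = t2 ∧ d1 = d2

def UrSig.typing (Psi : UrSig) (c : ConName) (t : UTy) (d : DataName) : Prop :=
  (c, t, d) ∈ Psi.cons

inductive Refines (Sgn : Sig) : Ty → UTy → Prop
  | unit : Refines Sgn .unit .unit
  | arr {A1 A2 t1 t2} : Refines Sgn A1 t1 → Refines Sgn A2 t2 →
      Refines Sgn (.arr A1 A2) (.arr t1 t2)
  | prod {A1 A2 t1 t2} : Refines Sgn A1 t1 → Refines Sgn A2 t2 →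
      Refines Sgn (.prod A1 A2) (.prod t1 t2)
  | sort {s d} : declaresSort Sgn s d → Refines Sgn (.sort s) (.data d)
  | inter {A1 A2 t} : Refines Sgn A1 t → Refines Sgn A2 t → Refines Sgn (.inter A1 A2) t

inductive TypeWF (Sgn : Sig) : Ty → Prop
  | unit : TypeWF Sgn .unit
  | arr {A1 A2} : TypeWF Sgn A1 → TypeWF Sgn A2 → TypeWF Sgn (.arr A1 A2)
  | prod {A1 A2} : TypeWF Sgn A1 → TypeWF Sgn A2 → TypeWF Sgn (.prod A1 A2)
  | sort {s} : s ∈ sigDom Sgn → TypeWF Sgn (.sort s)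
  | inter {A1 A2 t} : TypeWF Sgn A1 → TypeWF Sgn A2 →
      Refines Sgn A1 t → Refines Sgn A2 t → TypeWF Sgn (.inter A1 A2)

/-- Σ ⊢ c : A → s contype. -/
def ConTypeWF (Psi : UrSig) (Sgn : Sig) (c : ConName) (A : Ty) (s : SortName) : Prop :=
  TypeWF Sgn A ∧ TypeWF Sgn (.sort s) ∧
    ∃ t d, Psi.typing c t d ∧ Refines Sgn (.arr A (.sort s)) (.arr t (.data d))

/-- Constructor typing Σ ⊢ c : A → s. -/
def ConTyping (Sgn : Sig) (c : ConName) (A : Ty) (s : SortName) : Prop :=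
  ∃ s', declaresCon Sgn c A s' ∧ Subsort Sgn s' s

/-! ## Signature well-formedness -/

/-- safe(Σ; blk; c : A→s at t). -/
def SafeConAt (Sgn : Sig) (blk : Block) (c : ConName) (A : Ty) (s t : SortName) : Prop :=
  ∃ A' s', declaresCon Sgn c A' s' ∧ Subsort (Sgn ++ [blk]) s' t ∧
    Subsort (Sgn ++ [blk]) s s' ∧ Subty (Sgn ++ [blk]) A A'

/-- Σ; S ⊢ K ∋ elem safe, where the block blk is S⟨K⟩. -/
def ElemSafe (Psi : UrSig) (Sgn : Sig) (blk : Block) : Decl → Prop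
  | .subsort s1 s2 =>
      (s1 ∈ sigDom Sgn ∨ s1 ∈ blk.domS) ∧ (s2 ∈ sigDom Sgn ∨ s2 ∈ blk.domS)
  | .con c A s =>
      s ∈ blk.domS ∧ ConTypeWF Psi (Sgn ++ [blk]) c A s ∧
        ∀ t ∈ sigDom Sgn, Subsort (Sgn ++ [blk]) s t → SafeConAt Sgn blk c A s t

inductive SigWF (Psi : UrSig) : Sig → Prop
  | nil : SigWF Psi []
  | block {Sgn blk} :
      SigWF Psi Sgn →
      (∀ s ∈ blk.domS, s ∉ sigDom Sgn) →
      (∀ t1 ∈ sigDom Sgn, ∀ t2 ∈ sigDom Sgn,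
        (Subsort Sgn t1 t2 ↔ Subsort (Sgn ++ [blk]) t1 t2)) →
      (∀ elem ∈ blk.decls, ElemSafe Psi Sgn blk elem) →
      SigWF Psi (Sgn ++ [blk])

/-! ## Preservation of subsorting; non-adjacency; extension -/

/-- Σ' preserves subsorting of Σ. -/
def PreservesSub (Sgn Sgn' : Sig) : Prop :=
  ∀ s ∈ sigDom Sgn, ∀ t ∈ sigDom Sgn, Subsort (Sgn ++ Sgn') s t → Subsort Sgn s t

def Ty.sortsOf : Ty → List SortName
  | .unit => []
  | .arr A B => A.sortsOf ++ B.sortsOf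
  | .prod A B => A.sortsOf ++ B.sortsOf
  | .sort s => [s]
  | .inter A B => A.sortsOf ++ B.sortsOf

def Decl.mentions : Decl → List SortName
  | .subsort s1 s2 => [s1, s2]
  | .con _ A s => A.sortsOf ++ [s]

def Block.mentions (b : Block) : List SortName :=
  b.decls.foldr (fun d acc => d.mentions ++ acc) []

def sigMentions (Sgn : Sig) : List SortName :=
  Sgn.foldr (fun b acc => b.mentions ++ acc) []

/-- Two signature parts are non-adjacent if no declaration of either mentions
a sort declared by the other. -/
def NonAdjacent (Sg1 Sg2 : Sig) : Prop :=
  (∀ s ∈ sigMentions Sg1, s ∉ sigDom Sg2) ∧ (∀ s ∈ sigMentions Sg2, s ∉ sigDom Sg1)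

/-- Σ₊ extends Σ (Σ₊ ≽ Σ): the block sequence of Σ is a subsequence of that of Σ₊. -/
def SigExtends (Sgp Sgn : Sig) : Prop := List.Sublist Sgn Sgp

/-! ## Patterns -/

inductive Pat : Type
  | wild : Pat
  | empty : Pat
  | con : ConName → Pat → Pat
  | pair : Pat → Pat → Pat
  | as_ : Var → Pat → Pat
  | or : Pat → Pat → Pat
  | unit : Pat
  deriving DecidableEq

def Pat.boundVars : Pat → List Var
  | .wild => []
  | .empty => []
  | .unit => []
  | .con _ p => p.boundVars
  | .pair p1 p2 => p1.boundVars ++ p2.boundVars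
  | .as_ x p => x :: p.boundVars
  | .or p1 p2 => p1.boundVars ++ p2.boundVars

/-- Partial pattern intersection p₁ ∩ p₂. -/
def pinter : Pat → Pat → Option Pat
  | .empty, _ => some .empty
  | p, .empty =>
      match p with
      | _ => some .empty
  | .wild, p => some p
  | p, .wild => some p
  | .or p1 p2, p => do
      let q1 ← pinter p1 p
      let q2 ← pinter p2 p
      pure (.or q1 q2)
  | p, .or p1 p2 => do
      let q1 ← pinter p p1
      let q2 ← pinter p p2
      pure (.or q1 q2)
  | .con c1 p1, .con c2 p2 =>
      if c1 = c2 then (pinter p1 p2).map (Pat.con c1) else some .empty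
  | .pair _ _, .con _ _ => some .empty
  | .con _ _, .pair _ _ => some .empty
  | .pair p11 p12, .pair p21 p22 => do
      let q1 ← pinter p11 p21
      let q2 ← pinter p12 p22
      pure (.pair q1 q2)
  | _, _ => none

/-- The constructors of Ψ other than c. -/
def otherCons (Psi : UrSig) (c : ConName) : List ConName :=
  ((Psi.cons.map (fun x => x.1)).filter (fun c' => c' ≠ c)).dedup

/-- Pattern complement ¬p, relative to Ψ (partial). -/
def pcomp (Psi : UrSig) : Pat → Option Pat
  | .wild => some .empty
  | .empty => some .wild
  | .as_ _ p => pcomp Psi p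
  | .pair p1 p2 => do
      let q1 ← pcomp Psi p1
      let q2 ← pcomp Psi p2
      pure (.or (.pair q1 .wild) (.pair .wild q2))
  | .or p1 p2 => do
      let q1 ← pcomp Psi p1
      let q2 ← pcomp Psi p2
      pinter q1 q2
  | .con c p => do
      let q ← pcomp Psi p
      pure ((otherCons Psi c).foldl (fun acc c' => Pat.or acc (Pat.con c' .wild)) (Pat.con c q))
  | .unit => none

/-- Pattern typing Ψ ⊢ p : τ. -/
inductive PatType (Psi : UrSig) : Pat → UTy → Prop
  | wild {t} : PatType Psi .wild t
  | empty {t} : PatType Psi .empty t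
  | as_ {x p t} : PatType Psi p t → PatType Psi (.as_ x p) t
  | unit : PatType Psi .unit .unit
  | or {p1 p2 t} : PatType Psi p1 t → PatType Psi p2 t → PatType Psi (.or p1 p2) t
  | pair {p1 p2 t1 t2} : PatType Psi p1 t1 → PatType Psi p2 t2 →
      PatType Psi (.pair p1 p2) (.prod t1 t2)
  | con {c p t d} : Psi.typing c t d → PatType Psi p t → PatType Psi (.con c p) (.data d)

/-! ## Contexts and the intersect function -/

abbrev Ctx := List (Var × Ty)

/-- Membership in intersect(Σ; A; p): (Γ'; B) is a track of the intersection of A with p. -/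
inductive InIntersect (Sgn : Sig) : Pat → Ty → Ctx → Ty → Prop
  | wild {A} : InIntersect Sgn .wild A [] A
  | as_ {x p A G B} : InIntersect Sgn p A G B →
      InIntersect Sgn (.as_ x p) A (G ++ [(x, B)]) B
  | or1 {p1 p2 A G B} : InIntersect Sgn p1 A G B → InIntersect Sgn (.or p1 p2) A G B
  | or2 {p1 p2 A G B} : InIntersect Sgn p2 A G B → InIntersect Sgn (.or p1 p2) A G B
  | pair {p1 p2 A1 A2 G1 G2 B1 B2} :
      InIntersect Sgn p1 A1 G1 B1 → InIntersect Sgn p2 A2 G2 B2 →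
      InIntersect Sgn (.pair p1 p2) (.prod A1 A2) (G1 ++ G2) (.prod B1 B2)
  | con {c p0 Ac sc s G B} : declaresCon Sgn c Ac sc → Subsort Sgn sc s →
      InIntersect Sgn p0 Ac G B → InIntersect Sgn (.con c p0) (.sort s) G (.sort sc)

/-- intersect(Σ; A; p), as a set of tracks. -/
def intersect (Sgn : Sig) (A : Ty) (p : Pat) : Set (Ctx × Ty) :=
  { r | InIntersect Sgn p A r.1 r.2 }

/-- Σ ⊢ Γ₊ ≼ Γ : contexts declare the same variables in order, with pointwise subtyping. -/
def CtxStronger (Sgn : Sig) (Gp G : Ctx) : Prop :=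
  List.Forall₂ (fun a b => a.1 = b.1 ∧ Subty Sgn a.2 b.2) Gp G

/-- Σ ⊢ T₊ ≤trk T. -/
def TracksStronger (Sgn : Sig) (Tp T : Set (Ctx × Ty)) : Prop :=
  ∀ r ∈ Tp, ∃ r' ∈ T, CtxStronger Sgn r.1 r'.1 ∧ Subty Sgn r.2 r'.2

/-! ## Expressions -/

mutual
inductive Exp : Type
  | var : Var → Exp
  | lam : Var → Exp → Exp
  | app : Exp → Exp → Exp
  | pair : Exp → Exp → Exp
  | unit : Exp
  | con : ConName → Exp → Exp
  | case_ : Exp → Arms → Exp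
  | declare : Sig → Exp → Exp

inductive Arms : Type
  | nil : Arms
  | cons : Pat → Exp → Arms → Arms
end

inductive IsValue : Exp → Prop
  | var {x} : IsValue (.var x)
  | lam {x e} : IsValue (.lam x e)
  | pair {v1 v2} : IsValue v1 → IsValue v2 → IsValue (.pair v1 v2)
  | unit : IsValue .unit
  | con {c v} : IsValue v → IsValue (.con c v)

/-! ## Substitution -/

mutual
def substE (v : Exp) (x : Var) : Exp → Exp
  | .var y => if y = x then v else .var y
  | .lam y e => if y = x then .lam y e else .lam y (substE v x e)
  | .app e1 e2 => .app (substE v x e1) (substE v x e2)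
  | .pair e1 e2 => .pair (substE v x e1) (substE v x e2)
  | .unit => .unit
  | .con c e => .con c (substE v x e)
  | .case_ e ms => .case_ (substE v x e) (substA v x ms)
  | .declare sg e => .declare sg (substE v x e)

def substA (v : Exp) (x : Var) : Arms → Arms
  | .nil => .nil
  | .cons p e ms =>
      .cons p (if x ∈ p.boundVars then e else substE v x e) (substA v x ms)
end

/-- Apply a substitution θ (a list of value/variable pairs). -/
def applySubst (th : List (Var × Exp)) (e : Exp) : Exp :=
  th.foldl (fun e xv => substE xv.2 xv.1 e) e

/-! ## Pattern matching -/

inductive Matches : Pat → Exp → List (Var × Exp) → Prop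
  | wild {v} : Matches .wild v []
  | as_ {x p v th} : Matches p v th → Matches (.as_ x p) v (th ++ [(x, v)])
  | or1 {p1 p2 v th} : Matches p1 v th → Matches (.or p1 p2) v th
  | or2 {p1 p2 v th} : Matches p2 v th → Matches (.or p1 p2) v th
  | con {c p v th} : Matches p v th → Matches (.con c p) (.con c v) th
  | unit : Matches .unit .unit []
  | pair {p1 p2 v1 v2 th1 th2} : Matches p1 v1 th1 → Matches p2 v2 th2 →
      Matches (.pair p1 p2) (.pair v1 v2) (th1 ++ th2)

inductive NoMatch : Exp → Pat → Prop
  | empty {v} : NoMatch v .empty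
  | as_ {v x p} : NoMatch v p → NoMatch v (.as_ x p)
  | or {v p1 p2} : NoMatch v p1 → NoMatch v p2 → NoMatch v (.or p1 p2)
  | conHead {v c p} : (∀ v', v ≠ .con c v') → NoMatch v (.con c p)
  | conInner {c v p} : NoMatch v p → NoMatch (.con c v) (.con c p)
  | unit {v} : v ≠ .unit → NoMatch v .unit
  | pairHead {v p1 p2} : (∀ v1 v2, v ≠ .pair v1 v2) → NoMatch v (.pair p1 p2)
  | pair1 {v1 v2 p1 p2} : NoMatch v1 p1 → NoMatch (.pair v1 v2) (.pair p1 p2)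
  | pair2 {v1 v2 p1 p2} : NoMatch v2 p2 → NoMatch (.pair v1 v2) (.pair p1 p2)

/-! ## Typing -/

mutual
/-- Σ; Γ ⊢ e : A (type assignment). -/
inductive HasType (Psi : UrSig) : Sig → Ctx → Exp → Ty → Prop
  | var {Sgn G x A} : (x, A) ∈ G → HasType Psi Sgn G (.var x) A
  | sub {Sgn G e A B} : HasType Psi Sgn G e A → Subty Sgn A B → HasType Psi Sgn G e B
  | lam {Sgn G x e A B} : HasType Psi Sgn (G ++ [(x, A)]) e B →
      HasType Psi Sgn G (.lam x e) (.arr A B)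
  | app {Sgn G e1 e2 A B} : HasType Psi Sgn G e1 (.arr A B) → HasType Psi Sgn G e2 A →
      HasType Psi Sgn G (.app e1 e2) B
  | inter {Sgn G v A1 A2} : IsValue v → HasType Psi Sgn G v A1 → HasType Psi Sgn G v A2 →
      HasType Psi Sgn G v (.inter A1 A2)
  | pair {Sgn G e1 e2 A1 A2} : HasType Psi Sgn G e1 A1 → HasType Psi Sgn G e2 A2 →
      HasType Psi Sgn G (.pair e1 e2) (.prod A1 A2)
  | unit {Sgn G} : HasType Psi Sgn G .unit .unit
  | dataI {Sgn G c e A s} : ConTyping Sgn c A s → HasType Psi Sgn G e A →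
      HasType Psi Sgn G (.con c e) (.sort s)
  | dataE {Sgn G e ms A B} : HasType Psi Sgn G e A → MatchType Psi Sgn G A .wild ms B →
      HasType Psi Sgn G (.case_ e ms) B
  | declare {Sgn Sg' G e B} : SigWF Psi (Sgn ++ Sg') → TypeWF Sgn B →
      HasType Psi (Sgn ++ Sg') G e B → HasType Psi Sgn G (.declare Sg' e) B

/-- Σ; Γ; A; p ⊢ ms : D (match typing, with residual pattern p). -/
inductive MatchType (Psi : UrSig) : Sig → Ctx → Ty → Pat → Arms → Ty → Prop
  | nil {Sgn G A p D} : intersect Sgn A p = (∅ : Set (Ctx × Ty)) →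
      MatchType Psi Sgn G A p .nil D
  | cons {Sgn G A p p1 e1 ms D t q np1 q'} :
      Refines Sgn A t → PatType Psi p1 t →
      pinter p p1 = some q →
      (∀ G' B, (G', B) ∈ intersect Sgn A q → HasType Psi Sgn (G ++ G') e1 D) →
      pcomp Psi p1 = some np1 →
      pinter p np1 = some q' →
      MatchType Psi Sgn G A q' ms D →
      MatchType Psi Sgn G A p (.cons p1 e1 ms) D
end

/-- Substitution typing Σ; Γ ⊢ θ : Γ'. -/
inductive SubstType (Psi : UrSig) (Sgn : Sig) (G : Ctx) : List (Var × Exp) → Ctx → Prop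
  | nil : SubstType Psi Sgn G [] []
  | cons {th G' v x A} : SubstType Psi Sgn G th G' → IsValue v → HasType Psi Sgn G v A →
      SubstType Psi Sgn G (th ++ [(x, v)]) (G' ++ [(x, A)])

/-! ## Operational semantics -/

inductive ArmsStep (v : Exp) : Arms → Exp → Prop
  | match_ {p1 e1 ms th} : Matches p1 v th → ArmsStep v (.cons p1 e1 ms) (applySubst th e1)
  | else_ {p1 e1 ms e'} : NoMatch v p1 → ArmsStep v ms e' → ArmsStep v (.cons p1 e1 ms) e'

inductive Step : Exp → Exp → Prop
  | beta {x e v} : IsValue v → Step (.app (.lam x e) v) (substE v x e)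
  | declare {sg e} : Step (.declare sg e) e
  | case_ {v ms e'} : IsValue v → ArmsStep v ms e' → Step (.case_ v ms) e'
  | appL {e1 e1' e2} : Step e1 e1' → Step (.app e1 e2) (.app e1' e2)
  | appR {v e2 e2'} : IsValue v → Step e2 e2' → Step (.app v e2) (.app v e2')
  | conArg {c e e'} : Step e e' → Step (.con c e) (.con c e')
  | pairL {e1 e1' e2} : Step e1 e1' → Step (.pair e1 e2) (.pair e1' e2)
  | pairR {v e2 e2'} : IsValue v → Step e2 e2' → Step (.pair v e2) (.pair v e2')
  | caseScrut {e e' ms} : Step e e' → Step (.case_ e ms) (.case_ e' ms)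

/-! ## Typing derivations in which every type is well-formed under the local signature -/

mutual
inductive HasTypeW (Psi : UrSig) : Sig → Ctx → Exp → Ty → Prop
  | var {Sgn G x A} : (x, A) ∈ G → TypeWF Sgn A → HasTypeW Psi Sgn G (.var x) A
  | sub {Sgn G e A B} : HasTypeW Psi Sgn G e A → Subty Sgn A B → TypeWF Sgn B →
      HasTypeW Psi Sgn G e B
  | lam {Sgn G x e A B} : TypeWF Sgn (.arr A B) → HasTypeW Psi Sgn (G ++ [(x, A)]) e B →
      HasTypeW Psi Sgn G (.lam x e) (.arr A B)
  | app {Sgn G e1 e2 A B} : HasTypeW Psi Sgn G e1 (.arr A B) → HasTypeW Psi Sgn G e2 A →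
      HasTypeW Psi Sgn G (.app e1 e2) B
  | inter {Sgn G v A1 A2} : IsValue v → TypeWF Sgn (.inter A1 A2) →
      HasTypeW Psi Sgn G v A1 → HasTypeW Psi Sgn G v A2 →
      HasTypeW Psi Sgn G v (.inter A1 A2)
  | pair {Sgn G e1 e2 A1 A2} : HasTypeW Psi Sgn G e1 A1 → HasTypeW Psi Sgn G e2 A2 →
      HasTypeW Psi Sgn G (.pair e1 e2) (.prod A1 A2)
  | unit {Sgn G} : HasTypeW Psi Sgn G .unit .unit
  | dataI {Sgn G c e A s} : ConTyping Sgn c A s → TypeWF Sgn A → TypeWF Sgn (.sort s) →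
      HasTypeW Psi Sgn G e A → HasTypeW Psi Sgn G (.con c e) (.sort s)
  | dataE {Sgn G e ms A B} : HasTypeW Psi Sgn G e A → TypeWF Sgn A → TypeWF Sgn B →
      MatchTypeW Psi Sgn G A .wild ms B → HasTypeW Psi Sgn G (.case_ e ms) B
  | declare {Sgn Sg' G e B} : SigWF Psi (Sgn ++ Sg') → TypeWF Sgn B →
      HasTypeW Psi (Sgn ++ Sg') G e B → HasTypeW Psi Sgn G (.declare Sg' e) B

inductive MatchTypeW (Psi : UrSig) : Sig → Ctx → Ty → Pat → Arms → Ty → Prop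
  | nil {Sgn G A p D} : intersect Sgn A p = (∅ : Set (Ctx × Ty)) →
      MatchTypeW Psi Sgn G A p .nil D
  | cons {Sgn G A p p1 e1 ms D t q np1 q'} :
      Refines Sgn A t → PatType Psi p1 t →
      pinter p p1 = some q →
      (∀ G' B, (G', B) ∈ intersect Sgn A q → HasTypeW Psi Sgn (G ++ G') e1 D) →
      pcomp Psi p1 = some np1 →
      pinter p np1 = some q' →
      MatchTypeW Psi Sgn G A q' ms D →
      MatchTypeW Psi Sgn G A p (.cons p1 e1 ms) D
end

/-! ## Annotated expressions and the bidirectional system -/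

mutual
inductive AExp : Type
  | var : Var → AExp
  | lam : Var → AExp → AExp
  | app : AExp → AExp → AExp
  | pair : AExp → AExp → AExp
  | unit : AExp
  | con : ConName → AExp → AExp
  | case_ : AExp → AArms → AExp
  | declare : Sig → AExp → AExp
  | anno : AExp → List Ty → AExp

inductive AArms : Type
  | nil : AArms
  | cons : Pat → AExp → AArms → AArms
end

inductive IsAValue : AExp → Prop
  | var {x} : IsAValue (.var x)
  | lam {x e} : IsAValue (.lam x e)
  | pair {v1 v2} : IsAValue v1 → IsAValue v2 → IsAValue (.pair v1 v2)
  | unit : IsAValue .unit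
  | con {c v} : IsAValue v → IsAValue (.con c v)
  | anno {v As} : IsAValue v → IsAValue (.anno v As)

mutual
/-- |e|: erase all annotations. -/
def eraseE : AExp → Exp
  | .var x => .var x
  | .lam x e => .lam x (eraseE e)
  | .app e1 e2 => .app (eraseE e1) (eraseE e2)
  | .pair e1 e2 => .pair (eraseE e1) (eraseE e2)
  | .unit => .unit
  | .con c e => .con c (eraseE e)
  | .case_ e ms => .case_ (eraseE e) (eraseA ms)
  | .declare sg e => .declare sg (eraseE e)
  | .anno e _ => eraseE e

def eraseA : AArms → Arms
  | .nil => .nil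
  | .cons p e ms => .cons p (eraseE e) (eraseA ms)
end

mutual
/-- Σ; Γ ⊢ e ⇐ A (checking). -/
inductive Chk (Psi : UrSig) : Sig → Ctx → AExp → Ty → Prop
  | sub {Sgn G e A B} : Syn Psi Sgn G e A → Subty Sgn A B → Chk Psi Sgn G e B
  | lam {Sgn G x e A B} : Chk Psi Sgn (G ++ [(x, A)]) e B →
      Chk Psi Sgn G (.lam x e) (.arr A B)
  | inter {Sgn G v A1 A2} : IsAValue v → Chk Psi Sgn G v A1 → Chk Psi Sgn G v A2 →
      Chk Psi Sgn G v (.inter A1 A2)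
  | pair {Sgn G e1 e2 A1 A2} : Chk Psi Sgn G e1 A1 → Chk Psi Sgn G e2 A2 →
      Chk Psi Sgn G (.pair e1 e2) (.prod A1 A2)
  | unit {Sgn G} : Chk Psi Sgn G .unit .unit
  | dataI {Sgn G c e A s} : ConTyping Sgn c A s → Chk Psi Sgn G e A →
      Chk Psi Sgn G (.con c e) (.sort s)
  | dataE {Sgn G e ms A B} : Syn Psi Sgn G e A → MatchChk Psi Sgn G A .wild ms B →
      Chk Psi Sgn G (.case_ e ms) B
  | declare {Sgn Sg' G e B} : SigWF Psi (Sgn ++ Sg') → TypeWF Sgn B →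
      Chk Psi (Sgn ++ Sg') G e B → Chk Psi Sgn G (.declare Sg' e) B

/-- Σ; Γ ⊢ e ⇒ A (synthesis). -/
inductive Syn (Psi : UrSig) : Sig → Ctx → AExp → Ty → Prop
  | var {Sgn G x A} : (x, A) ∈ G → Syn Psi Sgn G (.var x) A
  | anno {Sgn G e As A} : A ∈ As → Chk Psi Sgn G e A → Syn Psi Sgn G (.anno e As) A
  | app {Sgn G e1 e2 A B} : Syn Psi Sgn G e1 (.arr A B) → Chk Psi Sgn G e2 A →
      Syn Psi Sgn G (.app e1 e2) B
  | interE1 {Sgn G e A1 A2} : Syn Psi Sgn G e (.inter A1 A2) → Syn Psi Sgn G e A1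
  | interE2 {Sgn G e A1 A2} : Syn Psi Sgn G e (.inter A1 A2) → Syn Psi Sgn G e A2

/-- Σ; Γ; A; p ⊢ ms ⇐ B (bidirectional match typing). -/
inductive MatchChk (Psi : UrSig) : Sig → Ctx → Ty → Pat → AArms → Ty → Prop
  | nil {Sgn G A p D} : intersect Sgn A p = (∅ : Set (Ctx × Ty)) →
      MatchChk Psi Sgn G A p .nil D
  | cons {Sgn G A p p1 e1 ms D t q np1 q'} :
      Refines Sgn A t → PatType Psi p1 t →
      pinter p p1 = some q →
      (∀ G' B, (G', B) ∈ intersect Sgn A q → Chk Psi Sgn (G ++ G') e1 D) →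
      pcomp Psi p1 = some np1 →
      pinter p np1 = some q' →
      MatchChk Psi Sgn G A q' ms D →
      MatchChk Psi Sgn G A p (.cons p1 e1 ms) D
end

/-! ## Auxiliary lemmas for the constructor lemma -/

theorem mem_sigDom {Sgn : Sig} {s : SortName} :
    s ∈ sigDom Sgn ↔ ∃ b ∈ Sgn, s ∈ b.domS := by
  induction Sgn with
  | nil => simp [sigDom]
  | cons b l ih =>
    simp only [sigDom, List.foldr_cons, List.mem_append, List.mem_cons]
    constructor
    · rintro (h | h)
      · exact ⟨b, Or.inl rfl, h⟩
      · rcases ih.mp h with ⟨b', hb', hs⟩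
        exact ⟨b', Or.inr hb', hs⟩
    · rintro ⟨b', (rfl | hb'), hs⟩
      · exact Or.inl hs
      · exact Or.inr (ih.mpr ⟨b', hb', hs⟩)

theorem sigDom_append (S1 S2 : Sig) : sigDom (S1 ++ S2) = sigDom S1 ++ sigDom S2 := by
  induction S1 with
  | nil => simp [sigDom]
  | cons b l ih => simp [sigDom, List.foldr_cons] at *

theorem sigDom_subset_of_sublist {S1 S2 : Sig} (h : List.Sublist S1 S2) :
    ∀ s ∈ sigDom S1, s ∈ sigDom S2 := by
  intro s hs
  rcases mem_sigDom.mp hs with ⟨b, hb, hsb⟩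
  exact mem_sigDom.mpr ⟨b, h.subset hb, hsb⟩

theorem subsort_weaken {S1 S2 : Sig} (h : List.Sublist S1 S2) {s t : SortName}
    (hst : Subsort S1 s t) : Subsort S2 s t := by
  induction hst with
  | assum hd =>
    rcases hd with ⟨b, hb, hdecl⟩
    exact Subsort.assum ⟨b, h.subset hb, hdecl⟩
  | refl hs => exact Subsort.refl (sigDom_subset_of_sublist h _ hs)
  | trans _ _ ih1 ih2 => exact Subsort.trans ih1 ih2

theorem subty_weaken {S1 S2 : Sig} (h : List.Sublist S1 S2) {A B : Ty}
    (hAB : Subty S1 A B) : Subty S2 A B := by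
  induction hAB with
  | unit => exact Subty.unit
  | prod _ _ ih1 ih2 => exact Subty.prod ih1 ih2
  | sort hs => exact Subty.sort (subsort_weaken h hs)
  | arr _ _ ih1 ih2 => exact Subty.arr ih1 ih2
  | interL1 _ ih => exact Subty.interL1 ih
  | interL2 _ ih => exact Subty.interL2 ih
  | interR _ _ ih1 ih2 => exact Subty.interR ih1 ih2

theorem subty_refl {Sgn : Sig} {A : Ty} (h : TypeWF Sgn A) : Subty Sgn A A := by
  induction h with
  | unit => exact Subty.unit
  | arr _ _ ih1 ih2 => exact Subty.arr ih1 ih2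
  | prod _ _ ih1 ih2 => exact Subty.prod ih1 ih2
  | sort hs => exact Subty.sort (Subsort.refl hs)
  | inter _ _ _ _ ih1 ih2 => exact Subty.interR (Subty.interL1 ih1) (Subty.interL2 ih2)

/-! ### Transitivity of subtyping, via a depth-indexed version -/

inductive SubtyN (Sgn : Sig) : Nat → Ty → Ty → Prop
  | unit {n} : SubtyN Sgn n .unit .unit
  | sort {n s t} : Subsort Sgn s t → SubtyN Sgn n (.sort s) (.sort t)
  | prod {n A1 A2 B1 B2} : SubtyN Sgn n A1 B1 → SubtyN Sgn n A2 B2 →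
      SubtyN Sgn (n+1) (.prod A1 A2) (.prod B1 B2)
  | arr {n A1 A2 B1 B2} : SubtyN Sgn n B1 A1 → SubtyN Sgn n A2 B2 →
      SubtyN Sgn (n+1) (.arr A1 A2) (.arr B1 B2)
  | interL1 {n A1 A2 B} : SubtyN Sgn n A1 B → SubtyN Sgn (n+1) (.inter A1 A2) B
  | interL2 {n A1 A2 B} : SubtyN Sgn n A2 B → SubtyN Sgn (n+1) (.inter A1 A2) B
  | interR {n A B1 B2} : SubtyN Sgn n A B1 → SubtyN Sgn n A B2 →
      SubtyN Sgn (n+1) A (.inter B1 B2)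

theorem subtyN_succ {Sgn : Sig} {n : Nat} {A B : Ty}
    (h : SubtyN Sgn n A B) : SubtyN Sgn (n+1) A B := by
  induction h with
  | unit => exact SubtyN.unit
  | sort hs => exact SubtyN.sort hs
  | prod _ _ ih1 ih2 => exact SubtyN.prod ih1 ih2
  | arr _ _ ih1 ih2 => exact SubtyN.arr ih1 ih2
  | interL1 _ ih => exact SubtyN.interL1 ih
  | interL2 _ ih => exact SubtyN.interL2 ih
  | interR _ _ ih1 ih2 => exact SubtyN.interR ih1 ih2

theorem subtyN_mono {Sgn : Sig} {n m : Nat} (hnm : n ≤ m) {A B : Ty}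
    (h : SubtyN Sgn n A B) : SubtyN Sgn m A B := by
  induction m with
  | zero => have : n = 0 := by omega
            subst this; exact h
  | succ m ih =>
    rcases Nat.lt_or_ge n (m+1) with hlt | hge
    · exact subtyN_succ (ih (by omega))
    · have : n = m + 1 := by omega
      subst this; exact h

theorem subty_to_subtyN {Sgn : Sig} {A B : Ty} (h : Subty Sgn A B) :
    ∃ n, SubtyN Sgn n A B := by
  induction h with
  | unit => exact ⟨0, SubtyN.unit⟩
  | sort hs => exact ⟨0, SubtyN.sort hs⟩
  | prod _ _ ih1 ih2 =>
    obtain ⟨n1, h1⟩ := ih1; obtain ⟨n2, h2⟩ := ih2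
    exact ⟨max n1 n2 + 1, SubtyN.prod (subtyN_mono (Nat.le_max_left _ _) h1)
      (subtyN_mono (Nat.le_max_right _ _) h2)⟩
  | arr _ _ ih1 ih2 =>
    obtain ⟨n1, h1⟩ := ih1; obtain ⟨n2, h2⟩ := ih2
    exact ⟨max n1 n2 + 1, SubtyN.arr (subtyN_mono (Nat.le_max_left _ _) h1)
      (subtyN_mono (Nat.le_max_right _ _) h2)⟩
  | interL1 _ ih => obtain ⟨n, h⟩ := ih; exact ⟨n + 1, SubtyN.interL1 h⟩
  | interL2 _ ih => obtain ⟨n, h⟩ := ih; exact ⟨n + 1, SubtyN.interL2 h⟩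
  | interR _ _ ih1 ih2 =>
    obtain ⟨n1, h1⟩ := ih1; obtain ⟨n2, h2⟩ := ih2
    exact ⟨max n1 n2 + 1, SubtyN.interR (subtyN_mono (Nat.le_max_left _ _) h1)
      (subtyN_mono (Nat.le_max_right _ _) h2)⟩

theorem subtyN_to_subty {Sgn : Sig} {n : Nat} {A B : Ty} (h : SubtyN Sgn n A B) :
    Subty Sgn A B := by
  induction h with
  | unit => exact Subty.unit
  | sort hs => exact Subty.sort hs
  | prod _ _ ih1 ih2 => exact Subty.prod ih1 ih2
  | arr _ _ ih1 ih2 => exact Subty.arr ih1 ih2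
  | interL1 _ ih => exact Subty.interL1 ih
  | interL2 _ ih => exact Subty.interL2 ih
  | interR _ _ ih1 ih2 => exact Subty.interR ih1 ih2

theorem subtyN_trans_aux {Sgn : Sig} :
    ∀ k m n {A B C : Ty}, m + n ≤ k → SubtyN Sgn m A B → SubtyN Sgn n B C →
      Subty Sgn A C := by
  intro k
  induction k with
  | zero =>
    intro m n A B C hk h1 h2
    have hm : m = 0 := by omega
    have hn : n = 0 := by omega
    subst hm; subst hn
    cases h1 with
    | unit => cases h2 with
      | unit => exact Subty.unit
    | sort hs1 => cases h2 with
      | sort hs2 => exact Subty.sort (Subsort.trans hs1 hs2)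
  | succ k ih =>
    intro m n A B C hk h1 h2
    cases h2 with
    | interR hb1 hb2 =>
      exact Subty.interR (ih _ _ (by omega) h1 hb1) (ih _ _ (by omega) h1 hb2)
    | unit =>
      cases h1 with
      | unit => exact Subty.unit
      | interL1 ha => exact Subty.interL1 (ih _ 0 (by omega) ha SubtyN.unit)
      | interL2 ha => exact Subty.interL2 (ih _ 0 (by omega) ha SubtyN.unit)
    | sort hs2 =>
      cases h1 with
      | sort hs1 => exact Subty.sort (Subsort.trans hs1 hs2)
      | interL1 ha => exact Subty.interL1 (ih _ 0 (by omega) ha (SubtyN.sort hs2))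
      | interL2 ha => exact Subty.interL2 (ih _ 0 (by omega) ha (SubtyN.sort hs2))
    | prod hb1 hb2 =>
      cases h1 with
      | prod ha1 ha2 =>
        exact Subty.prod (ih _ _ (by omega) ha1 hb1) (ih _ _ (by omega) ha2 hb2)
      | interL1 ha => exact Subty.interL1 (ih _ _ (by omega) ha (SubtyN.prod hb1 hb2))
      | interL2 ha => exact Subty.interL2 (ih _ _ (by omega) ha (SubtyN.prod hb1 hb2))
    | arr hb1 hb2 =>
      cases h1 with
      | arr ha1 ha2 =>
        exact Subty.arr (ih _ _ (by omega) hb1 ha1) (ih _ _ (by omega) ha2 hb2)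
      | interL1 ha => exact Subty.interL1 (ih _ _ (by omega) ha (SubtyN.arr hb1 hb2))
      | interL2 ha => exact Subty.interL2 (ih _ _ (by omega) ha (SubtyN.arr hb1 hb2))
    | interL1 hb =>
      cases h1 with
      | interR ha1 ha2 => exact ih _ _ (by omega) ha1 hb
      | interL1 ha => exact Subty.interL1 (ih _ _ (by omega) ha (SubtyN.interL1 hb))
      | interL2 ha => exact Subty.interL2 (ih _ _ (by omega) ha (SubtyN.interL1 hb))
    | interL2 hb =>
      cases h1 with
      | interR ha1 ha2 => exact ih _ _ (by omega) ha2 hb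
      | interL1 ha => exact Subty.interL1 (ih _ _ (by omega) ha (SubtyN.interL2 hb))
      | interL2 ha => exact Subty.interL2 (ih _ _ (by omega) ha (SubtyN.interL2 hb))

theorem subty_trans {Sgn : Sig} {A B C : Ty} (h1 : Subty Sgn A B) (h2 : Subty Sgn B C) :
    Subty Sgn A C := by
  obtain ⟨m, h1'⟩ := subty_to_subtyN h1
  obtain ⟨n, h2'⟩ := subty_to_subtyN h2
  exact subtyN_trans_aux (m + n) m n (le_refl _) h1' h2'

/-! ### Well-formed signatures: domains of declared things -/

theorem declaresSub_dom {Psi : UrSig} {Sgn : Sig} (hwf : SigWF Psi Sgn)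
    {s1 s2 : SortName} (h : declaresSub Sgn s1 s2) :
    s1 ∈ sigDom Sgn ∧ s2 ∈ sigDom Sgn := by
  induction hwf with
  | nil => rcases h with ⟨b, hb, _⟩; simp at hb
  | block hwfp hfresh hpres hsafe ih =>
    rename_i Sg blk
    rcases h with ⟨b, hb, hdecl⟩
    rw [sigDom_append]
    rcases List.mem_append.mp hb with hb | hb
    · have := ih ⟨b, hb, hdecl⟩
      exact ⟨List.mem_append.mpr (Or.inl this.1), List.mem_append.mpr (Or.inl this.2)⟩
    · have hbeq : b = blk := by simpa using hb
      subst hbeq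
      have := hsafe _ hdecl
      simp only [ElemSafe] at this
      obtain ⟨h1, h2⟩ := this
      constructor
      · rcases h1 with h1 | h1
        · exact List.mem_append.mpr (Or.inl h1)
        · exact List.mem_append.mpr (Or.inr (by simpa [sigDom, Block.domS] using h1))
      · rcases h2 with h2 | h2
        · exact List.mem_append.mpr (Or.inl h2)
        · exact List.mem_append.mpr (Or.inr (by simpa [sigDom, Block.domS] using h2))

theorem subsort_dom {Psi : UrSig} {Sgn : Sig} (hwf : SigWF Psi Sgn)
    {s1 s2 : SortName} (h : Subsort Sgn s1 s2) :
    s1 ∈ sigDom Sgn ∧ s2 ∈ sigDom Sgn := by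
  induction h with
  | assum hd => exact declaresSub_dom hwf hd
  | refl hs => exact ⟨hs, hs⟩
  | trans _ _ ih1 ih2 => exact ⟨ih1.1, ih2.2⟩

theorem declaresCon_dom {Psi : UrSig} {Sgn : Sig} (hwf : SigWF Psi Sgn)
    {c : ConName} {A : Ty} {s : SortName} (h : declaresCon Sgn c A s) :
    s ∈ sigDom Sgn := by
  induction hwf with
  | nil => rcases h with ⟨b, hb, _⟩; simp at hb
  | block hwfp hfresh hpres hsafe ih =>
    rename_i Sg blk
    rcases h with ⟨b, hb, hdecl⟩
    rw [sigDom_append]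
    rcases List.mem_append.mp hb with hb | hb
    · exact List.mem_append.mpr (Or.inl (ih ⟨b, hb, hdecl⟩))
    · have hbeq : b = blk := by simpa using hb
      subst hbeq
      have := hsafe _ hdecl
      simp only [ElemSafe] at this
      exact List.mem_append.mpr (Or.inr (by simpa [sigDom, Block.domS] using this.1))

theorem sigWF_concat_inv {Psi : UrSig} {Sg : Sig} {blk : Block}
    (h : SigWF Psi (Sg ++ [blk])) :
    SigWF Psi Sg ∧ (∀ s ∈ blk.domS, s ∉ sigDom Sg) ∧
      (∀ t1 ∈ sigDom Sg, ∀ t2 ∈ sigDom Sg,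
        (Subsort Sg t1 t2 ↔ Subsort (Sg ++ [blk]) t1 t2)) ∧
      (∀ elem ∈ blk.decls, ElemSafe Psi Sg blk elem) := by
  generalize hE : Sg ++ [blk] = L at h
  cases h with
  | nil => simp at hE
  | block hwf hfresh hpres hsafe =>
    obtain ⟨rfl, h2⟩ := List.append_inj' hE (by simp)
    obtain rfl : blk = _ := by simpa using h2
    exact ⟨hwf, hfresh, hpres, hsafe⟩

/-- Crossing lemma. -/
theorem crossing {Psi : UrSig} {Sg Sgn' : Sig} {blk : Block}
    (hwfp : SigWF Psi (Sg ++ [blk])) (hwfn : SigWF Psi (Sgn' ++ [blk]))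
    (hwfSg : SigWF Psi Sg)
    (hfresh : ∀ s ∈ blk.domS, s ∉ sigDom Sg)
    (hpres : ∀ t1 ∈ sigDom Sg, ∀ t2 ∈ sigDom Sg,
        (Subsort Sg t1 t2 ↔ Subsort (Sg ++ [blk]) t1 t2))
    (hsafeN : ∀ elem ∈ blk.decls, ElemSafe Psi Sgn' blk elem)
    {a b : SortName} (h : Subsort (Sg ++ [blk]) a b)
    (ha : a ∈ sigDom Sg) (hb : b ∈ blk.domS) :
    ∃ t ∈ sigDom Sgn', Subsort Sg a t := by
  induction h with
  | @assum s1 s2 hd =>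
    rcases hd with ⟨bl, hbl, hdecl⟩
    rcases List.mem_append.mp hbl with hbl | hbl
    · have := declaresSub_dom hwfSg ⟨bl, hbl, hdecl⟩
      exact absurd this.2 (hfresh _ hb)
    · have hbeq : bl = blk := by simpa using hbl
      subst hbeq
      have := hsafeN _ hdecl
      simp only [ElemSafe] at this
      rcases this.1 with h1 | h1
      · exact ⟨s1, h1, Subsort.refl ha⟩
      · exact absurd ha (hfresh _ h1)
  | @refl s hs => exact absurd ha (hfresh _ hb)
  | @trans s1 s2 s3 h12 h23 ih1 ih2 =>
    have hs2 : s2 ∈ sigDom (Sg ++ [blk]) := (subsort_dom hwfp h12).2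
    rw [sigDom_append] at hs2
    rcases List.mem_append.mp hs2 with hs2 | hs2
    · rcases ih2 hs2 hb with ⟨t, ht, hst⟩
      exact ⟨t, ht, Subsort.trans ((hpres _ ha _ hs2).mpr h12) hst⟩
    · have hs2' : s2 ∈ blk.domS := by simpa [sigDom, Block.domS] using hs2
      exact ih1 ha hs2'

/-- **Constructor lemma** (Statement 5). -/
theorem constructor_lemma (Psi : UrSig) (Sgn Sgp : Sig) (c : ConName)
    (Acp : Ty) (scp s : SortName)
    (h1 : SigWF Psi Sgn) (h2 : SigWF Psi Sgp) (h3 : SigExtends Sgp Sgn)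
    (h4 : declaresCon Sgp c Acp scp) (h5 : Subsort Sgp scp s) (h6 : s ∈ sigDom Sgn) :
    ∃ Ac sc, declaresCon Sgn c Ac sc ∧ Subsort Sgp scp sc ∧ Subty Sgp Acp Ac := by
  induction h2 generalizing Sgn Acp scp s with
  | nil => rcases h4 with ⟨b, hb, _⟩; simp at hb
  | @block Sg blk hwf hfresh hpres hsafe ih =>
    have hwfp : SigWF Psi (Sg ++ [blk]) := SigWF.block hwf hfresh hpres hsafe
    have hSgsub : List.Sublist Sg (Sg ++ [blk]) := List.sublist_append_left _ _
    have hdomblk : ∀ u, u ∈ sigDom [blk] ↔ u ∈ blk.domS := by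
      intro u; simp [sigDom]
    -- decompose the sublist h3
    obtain ⟨l1, l2, hSgnEq, hl1, hl2⟩ := List.sublist_append_iff.mp h3
    rcases List.sublist_singleton.mp hl2 with rfl | rfl
    case inl =>
      -- Sgn is a sublist of Sg
      rw [List.append_nil] at hSgnEq
      subst hSgnEq
      have hsubn : List.Sublist Sgn Sg := hl1
      have hsdom : s ∈ sigDom Sg := sigDom_subset_of_sublist hsubn s h6
      rcases h4 with ⟨b, hb, hdecl⟩
      rcases List.mem_append.mp hb with hbSg | hbblk
      · -- declaration in Sg
        have hdcSg : declaresCon Sg c Acp scp := ⟨b, hbSg, hdecl⟩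
        have hscpdom : scp ∈ sigDom Sg := declaresCon_dom hwf hdcSg
        have h5' : Subsort Sg scp s := (hpres scp hscpdom s hsdom).mpr h5
        obtain ⟨Ac, sc, hdcn, hsc, hty⟩ := ih Sgn Acp scp s h1 hsubn hdcSg h5' h6
        exact ⟨Ac, sc, hdcn, subsort_weaken hSgsub hsc, subty_weaken hSgsub hty⟩
      · -- declaration in blk
        have hbeq : b = blk := by simpa using hbblk
        subst hbeq
        have hes := hsafe _ hdecl
        simp only [ElemSafe] at hes
        obtain ⟨hscpblk, hct, hsafeAt⟩ := hes
        obtain ⟨A', s', hdc', hs's, hscps', hAA'⟩ := hsafeAt s hsdom h5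
        have hs'dom : s' ∈ sigDom Sg := declaresCon_dom hwf hdc'
        have hs'sSg : Subsort Sg s' s := (hpres s' hs'dom s hsdom).mpr hs's
        obtain ⟨Ac, sc, hdcn, hsc, hty⟩ := ih Sgn A' s' s h1 hsubn hdc' hs'sSg h6
        exact ⟨Ac, sc, hdcn, Subsort.trans hscps' (subsort_weaken hSgsub hsc),
          subty_trans hAA' (subty_weaken hSgsub hty)⟩
    case inr =>
      -- Sgn = l1 ++ [blk]
      subst hSgnEq
      obtain ⟨hwfl1, hfreshn, hpresn, hsafen⟩ := sigWF_concat_inv h1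
      have hl1sub : List.Sublist l1 (l1 ++ [blk]) := List.sublist_append_left _ _
      rcases h4 with ⟨b, hb, hdecl⟩
      rcases List.mem_append.mp hb with hbSg | hbblk
      · -- declaration in Sg
        have hdcSg : declaresCon Sg c Acp scp := ⟨b, hbSg, hdecl⟩
        have hscpdom : scp ∈ sigDom Sg := declaresCon_dom hwf hdcSg
        rw [sigDom_append] at h6
        rcases List.mem_append.mp h6 with hsl1 | hsblk
        · -- s declared in l1
          have hsSg : s ∈ sigDom Sg := sigDom_subset_of_sublist hl1 s hsl1
          have h5' : Subsort Sg scp s := (hpres scp hscpdom s hsSg).mpr h5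
          obtain ⟨Ac, sc, hdcn, hsc, hty⟩ := ih l1 Acp scp s hwfl1 hl1 hdcSg h5' hsl1
          refine ⟨Ac, sc, ?_, subsort_weaken hSgsub hsc, subty_weaken hSgsub hty⟩
          rcases hdcn with ⟨b', hb', hd'⟩
          exact ⟨b', List.mem_append.mpr (Or.inl hb'), hd'⟩
        · -- s declared in blk: use the crossing lemma
          have hsblk' : s ∈ blk.domS := (hdomblk s).mp hsblk
          obtain ⟨t, htdom, hscpt⟩ :=
            crossing hwfp h1 hwf hfresh hpres hsafen h5 hscpdom hsblk'
          obtain ⟨Ac, sc, hdcn, hsc, hty⟩ := ih l1 Acp scp t hwfl1 hl1 hdcSg hscpt htdom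
          refine ⟨Ac, sc, ?_, subsort_weaken hSgsub hsc, subty_weaken hSgsub hty⟩
          rcases hdcn with ⟨b', hb', hd'⟩
          exact ⟨b', List.mem_append.mpr (Or.inl hb'), hd'⟩
      · -- declaration in blk, and blk is also the last block of Sgn
        have hbeq : b = blk := by simpa using hbblk
        subst hbeq
        have hes := hsafe _ hdecl
        simp only [ElemSafe] at hes
        obtain ⟨hscpblk, hct, hsafeAt⟩ := hes
        refine ⟨Acp, scp, ⟨b, List.mem_append.mpr (Or.inr (by simp)), hdecl⟩, ?_, ?_⟩
        · exact Subsort.refl (mem_sigDom.mpr ⟨b, List.mem_append.mpr (Or.inr (by simp)), hscpblk⟩)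
        · exact subty_refl hct.1
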